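/- arXiv:2504.16785 — 3 statements merged into one kernel-verified Lean document; each statement's English description precedes it below -/
import Mathlib

section
/- Define a relation on Fox-Neuwirth cells of height m on {1,…,n}: Γ' ≤ Γ iff for all α ≠ β in {1,…,n}, if α <_r β in Γ (i.e. α precedes β with depth r), then in Γ' either α <_s β with s ≤ r, or β <_s α with s < r. This relation is a partial order (reflexive, transitive, and antisymmetric). -/
/-- A Fox-Neuwirth cell of height `m` on `{1,…,n}` (modelled on `Fin n`): a depth-ordering,
i.e. a strict linear order `lt` with depths `depth x y ∈ {0,…,m-1}` on related pairs
satisfying the min-rule (depths normalized to `0` on non-related pairs). -/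
structure DepthOrdering (m n : ℕ) where
  lt : Fin n → Fin n → Prop
  strict : IsStrictTotalOrder (Fin n) lt
  depth : Fin n → Fin n → ℕ
  depth_default : ∀ x y, ¬ lt x y → depth x y = 0
  depth_lt : ∀ x y, lt x y → depth x y < m
  min_rule : ∀ x y z, lt x y → lt y z → depth x z = min (depth x y) (depth y z)

/-- `Γ' ≤ Γ` iff whenever `α <_r β` in `Γ`, in `Γ'` either `α <_s β` with `s ≤ r`,
or `β <_s α` with `s < r`. -/
def cellLe {m n : ℕ} (Γ' Γ : DepthOrdering m n) : Prop :=
  ∀ α β, Γ.lt α β →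
    (Γ'.lt α β ∧ Γ'.depth α β ≤ Γ.depth α β) ∨
    (Γ'.lt β α ∧ Γ'.depth β α < Γ.depth α β)

lemma DepthOrdering.ext' {m n : ℕ} {Γ Γ' : DepthOrdering m n}
    (h : Γ.lt = Γ'.lt) (h2 : Γ.depth = Γ'.depth) : Γ = Γ' := by
  cases Γ; cases Γ'
  dsimp at h h2
  subst h; subst h2
  rfl

lemma cellLe_key {m n : ℕ} {Γ Γ' : DepthOrdering m n}
    (h1 : cellLe Γ Γ') (h2 : cellLe Γ' Γ) :
    ∀ α β, Γ'.lt α β → Γ.lt α β ∧ Γ.depth α β = Γ'.depth α β := by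
  intro α β h
  haveI := Γ'.strict
  rcases h1 α β h with ⟨ha, hd⟩ | ⟨ha, hd⟩
  · rcases h2 α β ha with ⟨_, hd2⟩ | ⟨hb, _⟩
    · exact ⟨ha, le_antisymm hd hd2⟩
    · exact absurd (trans_of Γ'.lt h hb) (irrefl_of Γ'.lt α)
  · rcases h2 β α ha with ⟨hb, _⟩ | ⟨_, hd2⟩
    · exact absurd (trans_of Γ'.lt h hb) (irrefl_of Γ'.lt α)
    · omega

/-- The relation `cellLe` on Fox-Neuwirth cells is a partial order: reflexive,
transitive and antisymmetric. -/
theorem stmt5 (m n : ℕ) :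
    (∀ Γ : DepthOrdering m n, cellLe Γ Γ) ∧
    (∀ Γ Γ' Γ'' : DepthOrdering m n, cellLe Γ Γ' → cellLe Γ' Γ'' → cellLe Γ Γ'') ∧
    (∀ Γ Γ' : DepthOrdering m n, cellLe Γ Γ' → cellLe Γ' Γ → Γ = Γ') := by
  refine ⟨?_, ?_, ?_⟩
  · intro Γ α β h
    exact Or.inl ⟨h, le_refl _⟩
  · intro Γ Γ' Γ'' h1 h2 α β h
    rcases h2 α β h with ⟨h', hd⟩ | ⟨h', hd⟩
    · rcases h1 α β h' with ⟨h'', hd'⟩ | ⟨h'', hd'⟩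
      · exact Or.inl ⟨h'', hd'.trans hd⟩
      · exact Or.inr ⟨h'', lt_of_lt_of_le hd' hd⟩
    · rcases h1 β α h' with ⟨h'', hd'⟩ | ⟨h'', hd'⟩
      · exact Or.inr ⟨h'', lt_of_le_of_lt hd' hd⟩
      · exact Or.inl ⟨h'', le_of_lt (hd'.trans hd)⟩
  · intro Γ Γ' h1 h2
    have k1 := cellLe_key h1 h2
    have k2 := cellLe_key h2 h1
    have hlt : Γ.lt = Γ'.lt := by
      funext α β
      exact propext ⟨fun h => (k2 α β h).1, fun h => (k1 α β h).1⟩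
    refine DepthOrdering.ext' hlt ?_
    funext α β
    by_cases h : Γ'.lt α β
    · exact (k1 α β h).2
    · rw [Γ.depth_default α β (hlt ▸ h), Γ'.depth_default α β h]
end

section
/- Commutation of eliminations: For a word L over an alphabet of letters and separators with multiplicities (a Fox monomial), and two distinct letters ℓ ≠ ℓ' occurring in L, the elimination operations satisfy e_ℓ(e_{ℓ'}(L)) = e_{ℓ'}(e_ℓ(L)), where e_ℓ removes the occurrence of ℓ and replaces the two adjacent separator strengths a, b by max(a, b). -/
/-- Elimination of the letter `a` from a Fox monomial, given as a list of letters
`x₁, …, x_k` together with the list of separator strengths `b₁, …, b_{k-1}`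
(`b_i` separating `x_i` from `x_{i+1}`): the (first occurrence of the) letter `a` is
deleted and, if it is an interior letter, the two adjacent separator strengths are
replaced by their maximum; if it is an extremal letter, the single adjacent separator
is deleted. -/
def elim {α : Type*} [DecidableEq α] (a : α) : List α → List ℕ → List α × List ℕ
  | [], bs => ([], bs)
  | [x], bs => if x = a then ([], []) else ([x], bs)
  | x :: y :: rest, bs =>
    if x = a then (y :: rest, bs.tail)
    else if y = a then
      match rest, bs with
      | [], _ => ([x], [])
      | _ :: _, b1 :: b2 :: bs2 => (x :: rest, max b1 b2 :: bs2)
      | _ :: _, _ => (x :: rest, [])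
    else
      match bs with
      | [] => (x :: (elim a (y :: rest) []).1, (elim a (y :: rest) []).2)
      | b1 :: brest => (x :: (elim a (y :: rest) brest).1, b1 :: (elim a (y :: rest) brest).2)

lemma elim_fst {α : Type*} [DecidableEq α] (a : α) :
    ∀ (xs : List α) (bs : List ℕ), (elim a xs bs).1 = xs.erase a := by
  intro xs
  induction xs with
  | nil => intro bs; simp [elim]
  | cons x t ih =>
    intro bs
    cases t with
    | nil =>
      by_cases h : x = a <;> simp [elim, h]
    | cons y rest =>
      by_cases hx : x = a
      · simp [elim, hx]
      · by_cases hy : y = a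
        · subst hy
          cases rest <;> cases bs <;>
            simp [elim, hx, List.erase_cons_tail, List.erase_cons_head] <;>
            first
              | rfl
              | (rename_i b bs'; cases bs' <;> simp)
        · cases bs <;> simp [elim, hx, hy, ih, List.erase_cons_tail]

lemma elim_shape {α : Type*} [DecidableEq α] {a y : α} (rest : List α) (bs : List ℕ)
    (h : y ≠ a) : ∃ u, elim a (y :: rest) bs = (y :: rest.erase a, u) := by
  refine ⟨(elim a (y :: rest) bs).2, ?_⟩
  have := elim_fst a (y :: rest) bs
  rw [List.erase_cons_tail (by simpa using h)] at this
  exact Prod.ext this rfl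

lemma elimA {α : Type*} [DecidableEq α] {l l' : α} (hne : l ≠ l') (y : α) (rest : List α)
    (bs : List ℕ) (hlen : bs.length = rest.length + 1) :
    elim l (elim l' (l :: y :: rest) bs).1 (elim l' (l :: y :: rest) bs).2 =
      elim l' (elim l (l :: y :: rest) bs).1 (elim l (l :: y :: rest) bs).2 := by
  obtain ⟨b1, bs', rfl⟩ : ∃ b1 bs', bs = b1 :: bs' := by
    cases bs with
    | nil => simp at hlen
    | cons b1 bs' => exact ⟨b1, bs', rfl⟩
  by_cases hy : y = l'
  · subst hy
    cases rest with
    | nil =>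
      obtain rfl : bs' = [] := by simpa using hlen
      simp [elim, hne, hne.symm]
    | cons r rest' =>
      obtain ⟨b2, bs2, rfl⟩ : ∃ b2 bs2, bs' = b2 :: bs2 := by
        cases bs' with
        | nil => simp at hlen
        | cons b2 bs2 => exact ⟨b2, bs2, rfl⟩
      simp [elim, hne, hne.symm]
  · obtain ⟨u, hE⟩ := elim_shape (a := l') rest bs' (fun h => hy h)
    simp only [elim, if_neg hne, if_neg hy, if_pos rfl]
    rw [hE]
    simp [elim]
    exact hE.symm

lemma elimB {α : Type*} [DecidableEq α] {l l' x : α} (hxl : x ≠ l) (hxl' : x ≠ l')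
    (hne : l ≠ l') (rest : List α) (hl' : l' ∈ rest) (bs : List ℕ)
    (hlen : bs.length = rest.length + 1) :
    elim l (elim l' (x :: l :: rest) bs).1 (elim l' (x :: l :: rest) bs).2 =
      elim l' (elim l (x :: l :: rest) bs).1 (elim l (x :: l :: rest) bs).2 := by
  obtain ⟨r, rest', rfl⟩ : ∃ r rest', rest = r :: rest' := by
    cases rest with
    | nil => simp at hl'
    | cons r rest' => exact ⟨r, rest', rfl⟩
  obtain ⟨b1, b2, bs2, rfl⟩ : ∃ b1 b2 bs2, bs = b1 :: b2 :: bs2 := by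
    match bs, hlen with
    | b1 :: b2 :: bs2, _ => exact ⟨b1, b2, bs2, rfl⟩
  by_cases hr : r = l'
  · subst hr
    cases rest' with
    | nil =>
      obtain rfl : bs2 = [] := by simpa using hlen
      simp [elim, hxl, hxl', hne, hne.symm]
    | cons r2 rs =>
      obtain ⟨c1, bs3, rfl⟩ : ∃ c1 bs3, bs2 = c1 :: bs3 := by
        match bs2, hlen with
        | c1 :: bs3, _ => exact ⟨c1, bs3, rfl⟩
      simp [elim, hxl, hxl', hne, hne.symm, Nat.max_assoc]
  · obtain ⟨u, hE⟩ := elim_shape (a := l') rest' bs2 (fun h => hr h)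
    simp only [elim, if_neg hxl, if_neg hxl', if_neg hne, if_pos rfl, if_neg hr]
    rw [hE]
    simp [elim, hxl, hxl', hne, hr]
    rw [hE]
    exact ⟨rfl, rfl⟩

/-- Commutation of eliminations: for a Fox monomial (distinct letters `xs`, separator
strengths `bs ∈ {0,1,2}` with `|bs| + 1 = |xs|`) and two distinct letters `l ≠ l'`
occurring in it, `e_l (e_{l'} L) = e_{l'} (e_l L)`. -/
theorem stmt11 {α : Type*} [DecidableEq α] (xs : List α) (bs : List ℕ)
    (hnodup : xs.Nodup) (hlen : bs.length + 1 = xs.length)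
    (hsep : ∀ b ∈ bs, b ≤ 2)
    (l l' : α) (hl : l ∈ xs) (hl' : l' ∈ xs) (hne : l ≠ l') :
    elim l (elim l' xs bs).1 (elim l' xs bs).2 =
      elim l' (elim l xs bs).1 (elim l xs bs).2 := by
  clear hsep
  induction xs generalizing bs with
  | nil => simp at hl
  | cons x t ih =>
    cases t with
    | nil =>
      simp at hl hl'
      exact absurd (hl.trans hl'.symm) hne
    | cons y rest =>
      by_cases hxl : x = l
      · subst hxl
        exact elimA hne y rest bs (by simp at hlen; omega)
      · by_cases hxl' : x = l'
        · subst hxl'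
          exact (elimA hne.symm y rest bs (by simp at hlen; omega)).symm
        · by_cases hyl : y = l
          · subst hyl
            have hm : l' ∈ rest := by
              rcases List.mem_cons.mp hl' with h | h'
              · exact absurd h.symm hxl'
              rcases List.mem_cons.mp h' with h | h
              · exact absurd h.symm hne
              · exact h
            exact elimB hxl hxl' hne rest hm bs (by simp at hlen; omega)
          · by_cases hyl' : y = l'
            · subst hyl'
              have hm : l ∈ rest := by
                rcases List.mem_cons.mp hl with h | h'
                · exact absurd h.symm hxl
                rcases List.mem_cons.mp h' with h | h
                · exact absurd h.symm (fun e => hne e.symm)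
                · exact h
              exact (elimB hxl' hxl hne.symm rest hm bs (by simp at hlen; omega)).symm
            · -- recursive case
              obtain ⟨b1, bs', rfl⟩ : ∃ b1 bs', bs = b1 :: bs' := by
                cases bs with
                | nil => simp at hlen
                | cons b1 bs' => exact ⟨b1, bs', rfl⟩
              obtain ⟨u, hE⟩ := elim_shape (a := l') rest bs' (fun h => hyl' h)
              obtain ⟨v, hF⟩ := elim_shape (a := l) rest bs' (fun h => hyl h)
              have hml : l ∈ y :: rest := by
                rcases List.mem_cons.mp hl with h | h
                · exact absurd h.symm hxl
                · exact h
              have hml' : l' ∈ y :: rest := by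
                rcases List.mem_cons.mp hl' with h | h
                · exact absurd h.symm hxl'
                · exact h
              have key : elim l (y :: rest.erase l') u = elim l' (y :: rest.erase l) v := by
                calc elim l (y :: rest.erase l') u
                    = elim l (elim l' (y :: rest) bs').1 (elim l' (y :: rest) bs').2 := by
                      rw [hE]
                  _ = elim l' (elim l (y :: rest) bs').1 (elim l (y :: rest) bs').2 :=
                      ih bs' hnodup.of_cons (by simp at hlen ⊢; omega) hml hml'
                  _ = elim l' (y :: rest.erase l) v := by rw [hF]
              simp only [elim, if_neg hxl, if_neg hxl', if_neg hyl, if_neg hyl']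
              rw [hE, hF]
              simp only [elim, if_neg hxl, if_neg hxl', if_neg hyl, if_neg hyl']
              rw [key]
end

section
/- Let X be a regular CW complex with cellular boundary ∂σ = Σ_{τ ⊲ σ} ε(τ,σ) τ over ℤ (codimension-1 faces τ of σ, incidence signs ε(τ,σ) = ±1). Define sd(σ) = Σ over maximal chains τ_0 ⊲ τ_1 ⊲ ⋯ ⊲ τ_d = σ of the product ε(τ_0,τ_1)⋯ε(τ_{d−1},τ_d) times the simplex (τ_0 < ⋯ < τ_d) in the simplicial chains of the nerve of the face poset. Working over 𝔽₂ (so signs are 1), sd is a chain map: sd ∘ ∂ = ∂ ∘ sd, where the simplicial boundary of a chain omits each element of the chain in turn. -/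
/-!
The boundary of `sd σ` omits each entry of each flag `f 0 ⋖ f 1 ⋖ ⋯ ⋖ f n = σ`. Omitting the top
entry `σ` leaves a flag ending at a facet `τ ⋖ σ`, and every such flag arises exactly once: these
terms add up to `sd (∂σ)`. Omitting an entry `f p` with `p < n`, the flags with the same remaining
entries are those with `f p` replaced by an element of the interval `(f (p - 1), f (p + 1))`, or by
a vertex below `f 1` when `p = 0`. The diamond property makes these sets have exactly two
elements, so the remaining terms cancel in pairs over `𝔽₂`.
-/

noncomputable section

/-- The cellular boundary over `𝔽₂` of the free module on a finite poset of cells with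
covering relation `cov`: `∂σ = Σ_{τ ⋖ σ} τ`. -/
def bdryCell {Q : Type} [Fintype Q] [DecidableEq Q] (cov : Q → Q → Prop)
    [DecidableRel cov] (x : Q →₀ ZMod 2) : Q →₀ ZMod 2 :=
  x.sum fun σ r => r • ∑ τ : Q, if cov τ σ then Finsupp.single τ (1 : ZMod 2) else 0

/-- The simplicial boundary on chains of the order complex (nerve), a chain being
recorded as a list: each element is omitted in turn; length-one lists (vertices) have
boundary `0` in the non-augmented setting. -/
def bdryChain {Q : Type} [DecidableEq Q] (x : List Q →₀ ZMod 2) : List Q →₀ ZMod 2 :=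
  x.sum fun l r =>
    if l.length ≤ 1 then 0
    else r • ∑ i ∈ Finset.range l.length, Finsupp.single (l.eraseIdx i) (1 : ZMod 2)

/-- The subdivision of a cell `σ` (over `𝔽₂`): the sum of all maximal chains
`τ₀ ⋖ τ₁ ⋖ ⋯ ⋖ τ_d = σ` starting at a cell of dimension `0` and ending at `σ`. -/
def sdOf {Q : Type} [Fintype Q] [DecidableEq Q] (cov : Q → Q → Prop) [DecidableRel cov]
    (dim : Q → ℕ) (σ : Q) : List Q →₀ ZMod 2 :=
  ∑ f : Fin (dim σ + 1) → Q,
    if (List.ofFn f).IsChain cov ∧ f ⟨dim σ, Nat.lt_succ_self _⟩ = σ ∧ dim (f 0) = 0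
    then Finsupp.single (List.ofFn f) (1 : ZMod 2) else 0

/-- The linear extension of the subdivision map. -/
def sdMap {Q : Type} [Fintype Q] [DecidableEq Q] (cov : Q → Q → Prop) [DecidableRel cov]
    (dim : Q → ℕ) (x : Q →₀ ZMod 2) : List Q →₀ ZMod 2 :=
  x.sum fun σ r => r • sdOf cov dim σ

open Finset

theorem Finset.sum_comp_eq_zero_of_even_card_fiber {α β M : Type*} [DecidableEq β]
    [AddCommMonoid M] [Module (ZMod 2) M] (s : Finset α) (φ : α → β) (g : β → M)
    (h : ∀ a ∈ s, Even #{a' ∈ s | φ a' = φ a}) : ∑ a ∈ s, g (φ a) = 0 := by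
  rw [Finset.sum_comp]
  refine Finset.sum_eq_zero fun b hb => ?_
  obtain ⟨a, ha, rfl⟩ := Finset.mem_image.mp hb
  rw [← Nat.cast_smul_eq_nsmul (ZMod 2), (ZMod.natCast_eq_zero_iff_even).mpr (h a ha), zero_smul]

theorem List.isChain_ofFn_iff_castSucc_succ {α : Type*} {n : ℕ} {f : Fin (n + 1) → α}
    {r : α → α → Prop} : (List.ofFn f).IsChain r ↔ ∀ i : Fin n, r (f i.castSucc) (f i.succ) :=
  List.isChain_ofFn.trans ⟨fun h i => h i (by omega), fun h i hi => h ⟨i, by omega⟩⟩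

theorem List.isChain_ofFn_update_iff {α : Type*} {n : ℕ} {f : Fin (n + 1) → α}
    {r : α → α → Prop} (hf : (List.ofFn f).IsChain r) (p : Fin (n + 1)) (a : α) :
    (List.ofFn (Function.update f p a)).IsChain r ↔
      (∀ i : Fin n, i.castSucc = p → r a (f i.succ)) ∧
        (∀ i : Fin n, i.succ = p → r (f i.castSucc) a) := by
  rw [List.isChain_ofFn_iff_castSucc_succ] at hf ⊢
  have hne (i : Fin n) : i.succ ≠ i.castSucc := (Fin.castSucc_lt_succ (i := i)).ne'
  constructor
  · refine fun h => ⟨fun i hi => ?_, fun i hi => ?_⟩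
    · simpa [← hi, hne] using h i
    · simpa [← hi, (hne i).symm] using h i
  · rintro ⟨hup, hdown⟩ i
    by_cases hi : i.castSucc = p
    · simpa [← hi, hne] using hup i hi
    by_cases hi' : i.succ = p
    · simpa [← hi', (hne i).symm] using hdown i hi'
    rw [Function.update_of_ne hi, Function.update_of_ne hi']
    exact hf i

theorem List.eraseIdx_ofFn {α : Type*} {n : ℕ} (f : Fin (n + 1) → α) (p : Fin (n + 1)) :
    (List.ofFn f).eraseIdx p = List.ofFn (p.removeNth f) := by
  refine List.ext_getElem (by simp [List.length_eraseIdx]; omega) fun j h₁ h₂ => ?_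
  have hj : j < n := by simpa using h₂
  simp only [List.getElem_eraseIdx, List.getElem_ofFn, Fin.removeNth_apply]
  split_ifs with h
  · rw [Fin.succAbove_of_castSucc_lt p ⟨j, hj⟩ (by simpa [Fin.lt_def] using h)]; rfl
  · rw [Fin.succAbove_of_le_castSucc p ⟨j, hj⟩ (by simp [Fin.le_def]; omega)]; rfl

section ChainBoundary

variable {Q : Type}

def chainFaces (l : List Q) : List Q →₀ ZMod 2 :=
  if l.length ≤ 1 then 0 else ∑ i ∈ range l.length, Finsupp.single (l.eraseIdx i) 1

theorem bdryChain_eq_linearCombination [DecidableEq Q] :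
    bdryChain = Finsupp.linearCombination (ZMod 2) (chainFaces (Q := Q)) := by
  ext1 x
  rw [Finsupp.linearCombination_apply, bdryChain]
  refine Finsupp.sum_congr fun l _ => ?_
  rw [chainFaces, smul_ite, smul_zero]

theorem chainFaces_ofFn {n : ℕ} (f : Fin (n + 2) → Q) :
    chainFaces (List.ofFn f) = ∑ i : Fin (n + 2), Finsupp.single (List.ofFn (i.removeNth f)) 1 := by
  rw [chainFaces, if_neg (by simp), List.length_ofFn, ← Fin.sum_univ_eq_sum_range]
  simp only [List.eraseIdx_ofFn]

end ChainBoundary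

section Subdivision

variable {Q : Type} [Fintype Q] [DecidableEq Q] {cov : Q → Q → Prop} [DecidableRel cov]
  {dim : Q → ℕ}

/-- Thin in Björner's sense once a bottom element is adjoined; `card_below` is the diamond
property at that bottom element. -/
structure IsThinGrading (cov : Q → Q → Prop) (dim : Q → ℕ) : Prop where
  dim_eq_of_cov : ∀ τ σ, cov τ σ → dim σ = dim τ + 1
  card_between : ∀ τ σ, Relation.TransGen cov τ σ → dim σ = dim τ + 2 →
    Nat.card {γ : Q // cov τ γ ∧ cov γ σ} = 2
  card_below : ∀ σ, dim σ = 1 → Nat.card {γ : Q // cov γ σ} = 2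

variable (cov) in
def cellFaces (σ : Q) : Q →₀ ZMod 2 :=
  ∑ τ with cov τ σ, Finsupp.single τ 1

theorem bdryCell_eq_linearCombination :
    bdryCell cov = Finsupp.linearCombination (ZMod 2) (cellFaces cov) := by
  ext1 x
  rw [Finsupp.linearCombination_apply, bdryCell]
  simp only [cellFaces, Finset.sum_filter]

theorem sdMap_eq_linearCombination :
    sdMap cov dim = Finsupp.linearCombination (ZMod 2) (sdOf cov dim) := by
  ext1 x
  rw [Finsupp.linearCombination_apply, sdMap]

variable (cov dim) in
def flags (σ : Q) (n : ℕ) : Finset (Fin (n + 1) → Q) :=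
  {f | (List.ofFn f).IsChain cov ∧ f (Fin.last n) = σ ∧ dim (f 0) = 0}

theorem sdOf_eq_sum_flags {σ : Q} {n : ℕ} (h : dim σ = n) :
    sdOf cov dim σ = ∑ f ∈ flags cov dim σ n, Finsupp.single (List.ofFn f) 1 := by
  subst h
  rw [flags, Finset.sum_filter]
  rfl

theorem apply_last_of_mem_flags {σ : Q} {n : ℕ} {f : Fin (n + 1) → Q}
    (hf : f ∈ flags cov dim σ n) : f (Fin.last n) = σ :=
  (mem_filter_univ f).mp hf |>.2.1

theorem dim_eq_of_mem_flags (hgrade : ∀ τ σ, cov τ σ → dim σ = dim τ + 1) {σ : Q} {n : ℕ}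
    {f : Fin (n + 1) → Q} (hf : f ∈ flags cov dim σ n) (i : Fin (n + 1)) : dim (f i) = i := by
  rw [flags, mem_filter_univ, List.isChain_ofFn_iff_castSucc_succ] at hf
  induction i using Fin.induction with
  | zero => exact hf.2.2
  | succ i ih => rw [hgrade _ _ (hf.1 i), ih, Fin.val_succ, Fin.val_castSucc]

theorem update_mem_flags_iff (hgrade : ∀ τ σ, cov τ σ → dim σ = dim τ + 1) {σ : Q} {n : ℕ}
    {f : Fin (n + 1) → Q} (hf : f ∈ flags cov dim σ n) {p : Fin (n + 1)}
    (hp : p ≠ Fin.last n) (γ : Q) :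
    Function.update f p γ ∈ flags cov dim σ n ↔
      (∀ i : Fin n, i.castSucc = p → cov γ (f i.succ)) ∧
        (∀ i : Fin n, i.succ = p → cov (f i.castSucc) γ) := by
  have hdim := dim_eq_of_mem_flags hgrade hf
  rw [flags, mem_filter_univ] at hf ⊢
  rw [List.isChain_ofFn_update_iff hf.1, Function.update_of_ne hp.symm]
  refine ⟨fun h => h.1, fun h => ⟨h, hf.2.1, ?_⟩⟩
  by_cases hp0 : p = 0
  · obtain ⟨i, hi⟩ := Fin.exists_castSucc_eq.mpr hp
    have hi0 : i.castSucc = 0 := hi.trans hp0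
    have := hgrade _ _ (h.1 i hi)
    rw [hdim, Fin.val_succ, ← Fin.val_castSucc, hi0] at this
    rw [hp0, Function.update_self]
    simpa using this
  · rw [Function.update_of_ne (Ne.symm hp0)]
    exact hf.2.2

theorem card_update_mem_flags (hQ : IsThinGrading cov dim) {σ : Q} {n : ℕ}
    {f : Fin (n + 1) → Q} (hf : f ∈ flags cov dim σ n) {p : Fin (n + 1)}
    (hp : p ≠ Fin.last n) :
    #{γ | Function.update f p γ ∈ flags cov dim σ n} = 2 := by
  have hdim := dim_eq_of_mem_flags hQ.dim_eq_of_cov hf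
  have hchain : ∀ i : Fin n, cov (f i.castSucc) (f i.succ) := by
    rw [flags, mem_filter_univ, List.isChain_ofFn_iff_castSucc_succ] at hf
    exact hf.1
  obtain ⟨j, rfl⟩ := Fin.exists_castSucc_eq.mpr hp
  obtain ⟨m, rfl⟩ : ∃ m, n = m + 1 := Nat.exists_eq_add_one.mpr j.pos
  rw [← Fintype.card_subtype, ← Nat.card_eq_fintype_card]
  simp_rw [update_mem_flags_iff hQ.dim_eq_of_cov hf hp, Fin.castSucc_inj, forall_eq]
  rcases Fin.eq_zero_or_eq_succ j with rfl | ⟨k, rfl⟩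
  · simp only [Fin.castSucc_zero, Fin.succ_ne_zero, IsEmpty.forall_iff, forall_const, and_true]
    exact hQ.card_below _ (by rw [hdim]; rfl)
  · simp only [← Fin.succ_castSucc, Fin.succ_inj, forall_eq, and_comm (a := cov _ (f _))]
    have hlower := hchain k.castSucc
    rw [Fin.succ_castSucc] at hlower
    refine hQ.card_between _ _ (.head hlower (.single (hchain k.succ))) ?_
    simp [hdim]

theorem card_fiber_removeNth_flags (hQ : IsThinGrading cov dim) {σ : Q} {n : ℕ}
    {f : Fin (n + 1) → Q} (hf : f ∈ flags cov dim σ n) {p : Fin (n + 1)}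
    (hp : p ≠ Fin.last n) :
    #{g ∈ flags cov dim σ n | p.removeNth g = p.removeNth f} = 2 := by
  have hupdate {g : Fin (n + 1) → Q} (hg : p.removeNth g = p.removeNth f) :
      Function.update f p (g p) = g := by
    rw [← Fin.insertNth_removeNth, ← hg, Fin.insertNth_self_removeNth]
  rw [← card_update_mem_flags hQ hf hp]
  refine Finset.card_nbij' (· p) (Function.update f p) (fun g hg => ?_) (fun γ hγ => ?_)
    (fun g hg => hupdate (mem_filter.mp hg).2) (fun γ _ => Function.update_self ..)
  · rw [mem_coe, mem_filter] at hg
    rw [mem_coe, mem_filter_univ, hupdate hg.2]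
    exact hg.1
  · rw [mem_coe, mem_filter_univ] at hγ
    rw [mem_coe, mem_filter, Fin.removeNth_update]
    exact ⟨hγ, rfl⟩

theorem sum_flags_removeNth_eq_zero (hQ : IsThinGrading cov dim) (σ : Q) {n : ℕ}
    {p : Fin (n + 1)} (hp : p ≠ Fin.last n) :
    ∑ f ∈ flags cov dim σ n, Finsupp.single (List.ofFn (p.removeNth f)) (1 : ZMod 2) = 0 := by
  refine Finset.sum_comp_eq_zero_of_even_card_fiber _ (fun f : Fin (n + 1) → Q => p.removeNth f)
    (fun y : Fin n → Q => Finsupp.single (List.ofFn y) (1 : ZMod 2)) fun f hf => ?_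
  rw [card_fiber_removeNth_flags hQ hf hp]
  exact even_two

theorem mem_flags_succ_iff {σ : Q} {m : ℕ} {f : Fin (m + 2) → Q} :
    f ∈ flags cov dim σ (m + 1) ↔
      Fin.init f ∈ flags cov dim (f (Fin.last m).castSucc) m ∧
        cov (f (Fin.last m).castSucc) σ ∧ f (Fin.last (m + 1)) = σ := by
  simp only [flags, mem_filter_univ, List.isChain_ofFn_iff_castSucc_succ, Fin.forall_fin_succ',
    Fin.init, Fin.succ_castSucc, Fin.succ_last, Fin.castSucc_zero]
  constructor
  · rintro ⟨⟨hchain, hlast⟩, rfl, hzero⟩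
    exact ⟨⟨hchain, trivial, hzero⟩, hlast, rfl⟩
  · rintro ⟨⟨hchain, -, hzero⟩, hlast, rfl⟩
    exact ⟨⟨hchain, hlast⟩, rfl, hzero⟩

theorem sum_flags_init (σ : Q) (m : ℕ) :
    ∑ f ∈ flags cov dim σ (m + 1), Finsupp.single (List.ofFn (Fin.init f)) (1 : ZMod 2) =
      ∑ τ with cov τ σ, ∑ g ∈ flags cov dim τ m, Finsupp.single (List.ofFn g) 1 := by
  rw [Finset.sum_sigma']
  refine Finset.sum_nbij' (fun f => ⟨f (Fin.last m).castSucc, Fin.init f⟩)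
    (fun x => Fin.snoc x.2 σ) (fun f hf => ?_) (fun x hx => ?_) (fun f hf => ?_)
    (fun x hx => ?_) (fun _ _ => rfl)
  · rw [mem_flags_succ_iff] at hf
    simpa using ⟨hf.2.1, hf.1⟩
  · obtain ⟨hcov, hx⟩ : cov x.1 σ ∧ x.2 ∈ flags cov dim x.1 m := by simpa using hx
    simpa [mem_flags_succ_iff, apply_last_of_mem_flags hx] using ⟨hx, hcov⟩
  · rw [mem_flags_succ_iff] at hf
    simp [← hf.2.2]
  · obtain ⟨-, hx⟩ : cov x.1 σ ∧ x.2 ∈ flags cov dim x.1 m := by simpa using hx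
    simp [apply_last_of_mem_flags hx]

theorem bdryChain_sdOf (hQ : IsThinGrading cov dim) (σ : Q) :
    bdryChain (sdOf cov dim σ) = ∑ τ with cov τ σ, sdOf cov dim τ := by
  obtain ⟨n, hn⟩ : ∃ n, dim σ = n := ⟨_, rfl⟩
  rw [sdOf_eq_sum_flags hn, bdryChain_eq_linearCombination, map_sum]
  simp only [Finsupp.linearCombination_single, one_smul]
  cases n with
  | zero =>
    refine (Finset.sum_eq_zero fun f _ => by simp [chainFaces]).trans
      (Finset.sum_eq_zero fun τ hτ => ?_).symm
    have := hQ.dim_eq_of_cov τ σ (mem_filter_univ τ |>.mp hτ)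
    omega
  | succ m =>
    simp only [chainFaces_ofFn]
    rw [Finset.sum_comm, Fin.sum_univ_castSucc,
      Finset.sum_eq_zero fun i _ => sum_flags_removeNth_eq_zero hQ σ
        (Fin.castSucc_ne_last i), zero_add]
    simp only [Fin.removeNth_last]
    rw [sum_flags_init]
    refine Finset.sum_congr rfl fun τ hτ => (sdOf_eq_sum_flags ?_).symm
    have := hQ.dim_eq_of_cov τ σ (mem_filter_univ τ |>.mp hτ)
    omega

theorem sdMap_bdryCell_single (σ : Q) :
    sdMap cov dim (bdryCell cov (Finsupp.single σ 1)) = ∑ τ with cov τ σ, sdOf cov dim τ := by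
  rw [bdryCell_eq_linearCombination, Finsupp.linearCombination_single, one_smul, cellFaces,
    sdMap_eq_linearCombination, map_sum]
  simp only [Finsupp.linearCombination_single, one_smul]

end Subdivision

theorem stmt16_general {Q : Type} [Fintype Q] [DecidableEq Q] (cov : Q → Q → Prop)
    [DecidableRel cov] (dim : Q → ℕ)
    (hgrade : ∀ τ σ, cov τ σ → dim σ = dim τ + 1)
    (hdiamond : ∀ τ σ, Relation.TransGen cov τ σ → dim σ = dim τ + 2 →
        Nat.card {γ : Q // cov τ γ ∧ cov γ σ} = 2)
    (hdiamond0 : ∀ σ, dim σ = 1 → Nat.card {γ : Q // cov γ σ} = 2) :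
    ∀ x : Q →₀ ZMod 2, sdMap cov dim (bdryCell cov x) = bdryChain (sdMap cov dim x) := by
  have hQ : IsThinGrading cov dim := ⟨hgrade, hdiamond, hdiamond0⟩
  have hsingle (σ : Q) : sdMap cov dim (bdryCell cov (Finsupp.single σ 1)) =
      bdryChain (sdMap cov dim (Finsupp.single σ 1)) := by
    rw [sdMap_bdryCell_single, sdMap_eq_linearCombination, Finsupp.linearCombination_single,
      one_smul, bdryChain_sdOf hQ]
  rw [sdMap_eq_linearCombination, bdryCell_eq_linearCombination,
    bdryChain_eq_linearCombination] at hsingle ⊢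
  intro x
  induction x using Finsupp.induction_linear with
  | zero => simp only [map_zero]
  | add x y hx hy => simp only [map_add, hx, hy]
  | single σ r =>
    rw [← mul_one r, ← smul_eq_mul, ← Finsupp.smul_single]
    simp only [map_smul, hsingle]

/-- Over `𝔽₂`, for a finite graded poset (the face poset of a regular CW complex, with
covering relation `cov`, grading `dim`, cellular boundary squaring to zero, and the
diamond property — including at the bottom: every 1-cell covers exactly two 0-cells),
the barycentric subdivision map is a chain map: `sd ∘ ∂ = ∂ ∘ sd`. -/
theorem stmt16 {Q : Type} [Fintype Q] [DecidableEq Q] (cov : Q → Q → Prop)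
    [DecidableRel cov] (dim : Q → ℕ)
    (hgrade : ∀ τ σ, cov τ σ → dim σ = dim τ + 1)
    (hd2 : ∀ x : Q →₀ ZMod 2, bdryCell cov (bdryCell cov x) = 0)
    (hdiamond : ∀ τ σ, Relation.TransGen cov τ σ → dim σ = dim τ + 2 →
        Nat.card {γ : Q // cov τ γ ∧ cov γ σ} = 2)
    (hdiamond0 : ∀ σ, dim σ = 1 → Nat.card {γ : Q // cov γ σ} = 2) :
    ∀ x : Q →₀ ZMod 2, sdMap cov dim (bdryCell cov x) = bdryChain (sdMap cov dim x) :=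
  stmt16_general cov dim hgrade hdiamond hdiamond0
end
end
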